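/- Fix T>0, n∈ℕ, λ>0, γ≥0, σ≥0, risk aversions α₁,…,αₙ≥0, a continuous function b:[0,T]→ℝ, and initial positions x₁,…,xₙ∈ℝ. There exists at most one Nash equilibrium, i.e. at most one tuple (X₁*,…,Xₙ*) with Xᵢ*∈𝒳(xᵢ,T) for each i such that Xᵢ* maximizes Y ↦ Jᵢ(Y; X*₋ᵢ) over 𝒳(xᵢ,T), where X*₋ᵢ denotes the strategies of all players other than i. -/

import Mathlib

open Set MeasureTheory


/-- `f` is square-integrable (and a.e. strongly measurable) on `(0,T]`. -/
def L2fun (T : ℝ) (f : ℝ → ℝ) : Prop :=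
  AEStronglyMeasurable f (volume.restrict (Ioc (0:ℝ) T)) ∧
  IntervalIntegrable (fun t => f t ^ 2) volume 0 T

lemma L2fun.zero {T : ℝ} : L2fun T (fun _ => (0:ℝ)) :=
  ⟨aestronglyMeasurable_const, by
    have : (fun t : ℝ => (0:ℝ) ^ 2) = fun _ => (0:ℝ) := by funext t; ring
    rw [this]; exact intervalIntegrable_const⟩

lemma L2fun.mul_II {T : ℝ} (hT : 0 ≤ T) {f g : ℝ → ℝ} (hf : L2fun T f) (hg : L2fun T g) :
    IntervalIntegrable (fun t => f t * g t) volume 0 T := by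
  rw [intervalIntegrable_iff, uIoc_of_le hT]
  have h2 : IntegrableOn (fun t => f t ^ 2 + g t ^ 2) (Ioc 0 T) volume := by
    have := hf.2.add hg.2
    rw [intervalIntegrable_iff, uIoc_of_le hT] at this
    exact this
  refine Integrable.mono' h2 (hf.1.mul hg.1) ?_
  refine ae_of_all _ fun t => ?_
  show ‖f t * g t‖ ≤ f t ^ 2 + g t ^ 2
  rw [Real.norm_eq_abs, abs_mul]
  nlinarith [sq_abs (f t), sq_abs (g t), sq_nonneg (|f t| - |g t|)]

lemma L2fun.II {T : ℝ} (hT : 0 ≤ T) {f : ℝ → ℝ} (hf : L2fun T f) :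
    IntervalIntegrable f volume 0 T := by
  have hone : L2fun T (fun _ => (1:ℝ)) :=
    ⟨aestronglyMeasurable_const, by simp⟩
  simpa using hf.mul_II hT hone

lemma L2fun.add {T : ℝ} (hT : 0 ≤ T) {f g : ℝ → ℝ} (hf : L2fun T f) (hg : L2fun T g) :
    L2fun T (fun t => f t + g t) := by
  refine ⟨hf.1.add hg.1, ?_⟩
  have h := (hf.2.add hg.2).add ((hf.mul_II hT hg).const_mul 2)
  have he : (fun t => f t ^ 2 + g t ^ 2 + 2 * (f t * g t)) = fun t => (f t + g t) ^ 2 := by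
    funext t; ring
  rwa [he] at h

lemma L2fun.smul {T : ℝ} {f : ℝ → ℝ} (c : ℝ) (hf : L2fun T f) :
    L2fun T (fun t => c * f t) := by
  refine ⟨hf.1.const_mul c, ?_⟩
  have h := hf.2.const_mul (c ^ 2)
  have he : (fun t => c ^ 2 * f t ^ 2) = fun t => (c * f t) ^ 2 := by funext t; ring
  rwa [he] at h

lemma L2fun.neg {T : ℝ} {f : ℝ → ℝ} (hf : L2fun T f) : L2fun T (fun t => - f t) := by
  have := hf.smul (-1)
  have he : (fun t => (-1 : ℝ) * f t) = fun t => - f t := by funext t; ring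
  rwa [he] at this

lemma L2fun.sub {T : ℝ} (hT : 0 ≤ T) {f g : ℝ → ℝ} (hf : L2fun T f) (hg : L2fun T g) :
    L2fun T (fun t => f t - g t) := by
  have := hf.add hT hg.neg
  have he : (fun t => f t + - g t) = fun t => f t - g t := by funext t; ring
  rwa [he] at this

lemma L2fun.sum {T : ℝ} (hT : 0 ≤ T) {ι : Type*} (s : Finset ι) (f : ι → ℝ → ℝ)
    (hf : ∀ j ∈ s, L2fun T (f j)) : L2fun T (fun t => ∑ j ∈ s, f j t) := by
  classical
  induction s using Finset.induction_on with
  | empty => simpa using L2fun.zero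
  | insert _ _ hns ih =>
    rename_i a s
    have h1 : L2fun T (f a) := hf a (Finset.mem_insert_self a s)
    have h2 : L2fun T (fun t => ∑ j ∈ s, f j t) :=
      ih fun j hj => hf j (Finset.mem_insert_of_mem hj)
    have := h1.add hT h2
    simpa [Finset.sum_insert hns] using this

lemma L2fun.of_continuousOn {T : ℝ} (hT : 0 ≤ T) {f : ℝ → ℝ}
    (hf : ContinuousOn f (Icc 0 T)) : L2fun T f := by
  constructor
  · exact (hf.mono Ioc_subset_Icc_self).aestronglyMeasurable measurableSet_Ioc
  · exact ContinuousOn.intervalIntegrable (by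
      rw [uIcc_of_le hT]; exact (hf.pow 2))


/-- The class 𝒳(x,T): `Y` is absolutely continuous on `[0,T]` with
(square-integrable) derivative `D`, and satisfies the boundary conditions
`Y(0) = x` (implied by the integral representation) and `Y(T) = 0`. -/
def Admissible (T x : ℝ) (Y D : ℝ → ℝ) : Prop :=
  Measurable D ∧
  IntervalIntegrable (fun t => (D t) ^ 2) volume 0 T ∧
  (∀ t ∈ Icc (0 : ℝ) T, Y t = x + ∫ s in (0 : ℝ)..t, D s) ∧
  Y T = 0

/-- Player `i`'s mean-variance objective functional
`Jᵢ(Y; X₋ᵢ) = ∫₀ᵀ [Y(t)(b(t)+γS(t)) − (αᵢσ²/2)Y(t)² − λẎ(t)(S(t)+Ẏ(t))] dt`,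
where `S = Σ_{j≠i} Ẋⱼ` is the aggregate trading rate of the competitors,
`Y` is the strategy and `D = Ẏ` its derivative. -/
noncomputable def objective (T lam gam sig αi : ℝ) (b S Y D : ℝ → ℝ) : ℝ :=
  ∫ t in (0 : ℝ)..T,
    (Y t * (b t + gam * S t) - αi * sig ^ 2 / 2 * (Y t) ^ 2
      - lam * D t * (S t + D t))

lemma Admissible.l2D {T x : ℝ} {Y D : ℝ → ℝ} (h : Admissible T x Y D) : L2fun T D :=
  ⟨h.1.aestronglyMeasurable, h.2.1⟩

lemma Admissible.contY {T x : ℝ} {Y D : ℝ → ℝ} (hT : 0 ≤ T) (h : Admissible T x Y D) :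
    ContinuousOn Y (Icc 0 T) := by
  have hprim : ContinuousOn (fun t => ∫ s in (0:ℝ)..t, D s) (Icc 0 T) := by
    have := intervalIntegral.continuousOn_primitive_interval' (h.l2D.II hT) left_mem_uIcc
    rwa [uIcc_of_le hT] at this
  exact (continuousOn_const.add hprim).congr h.2.2.1

lemma Admissible.l2Y {T x : ℝ} {Y D : ℝ → ℝ} (hT : 0 ≤ T) (h : Admissible T x Y D) :
    L2fun T Y := L2fun.of_continuousOn hT (h.contY hT)

lemma objective_eq {T lam gam sig αi : ℝ} {b S Y D : ℝ → ℝ} (hT : 0 ≤ T)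
    (hb : L2fun T b) (hS : L2fun T S) (hY : L2fun T Y) (hD : L2fun T D) :
    objective T lam gam sig αi b S Y D =
      (∫ t in (0:ℝ)..T, Y t * b t) + gam * (∫ t in (0:ℝ)..T, Y t * S t)
        - αi * sig ^ 2 / 2 * (∫ t in (0:ℝ)..T, Y t ^ 2)
        - lam * (∫ t in (0:ℝ)..T, D t * S t) - lam * (∫ t in (0:ℝ)..T, D t ^ 2) := by
  have h1 := hY.mul_II hT hb
  have h2 := hY.mul_II hT hS
  have h3 := hY.2
  have h4 := hD.mul_II hT hS
  have h5 := hD.2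
  unfold objective
  rw [intervalIntegral.integral_congr
    (g := fun t => Y t * b t + gam * (Y t * S t) - αi * sig ^ 2 / 2 * (Y t ^ 2)
      - lam * (D t * S t) - lam * (D t ^ 2)) (fun t _ => by ring)]
  rw [intervalIntegral.integral_sub (((h1.add (h2.const_mul gam)).sub
      (h3.const_mul (αi * sig ^ 2 / 2))).sub (h4.const_mul lam)) (h5.const_mul lam),
    intervalIntegral.integral_sub ((h1.add (h2.const_mul gam)).sub
      (h3.const_mul (αi * sig ^ 2 / 2))) (h4.const_mul lam),
    intervalIntegral.integral_sub (h1.add (h2.const_mul gam))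
      (h3.const_mul (αi * sig ^ 2 / 2)),
    intervalIntegral.integral_add h1 (h2.const_mul gam),
    intervalIntegral.integral_const_mul, intervalIntegral.integral_const_mul,
    intervalIntegral.integral_const_mul, intervalIntegral.integral_const_mul]

lemma Admissible.combo {T x : ℝ} {X D Y E : ℝ → ℝ} (hT : 0 ≤ T)
    (hX : Admissible T x X D) (hY : Admissible T x Y E) (c : ℝ) :
    Admissible T x (fun t => X t + c * (Y t - X t)) (fun t => D t + c * (E t - D t)) := by
  refine ⟨hX.1.add ((hY.1.sub hX.1).const_mul c), ?_, ?_, ?_⟩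
  · exact (hX.l2D.add hT ((hY.l2D.sub hT hX.l2D).smul c)).2
  · intro t ht
    have htT : t ∈ uIcc (0:ℝ) T := by rw [uIcc_of_le hT]; exact ht
    have hDt : IntervalIntegrable D volume 0 t :=
      (hX.l2D.II hT).mono_set (uIcc_subset_uIcc left_mem_uIcc htT)
    have hEt : IntervalIntegrable E volume 0 t :=
      (hY.l2D.II hT).mono_set (uIcc_subset_uIcc left_mem_uIcc htT)
    simp only []
    rw [hX.2.2.1 t ht, hY.2.2.1 t ht,
      intervalIntegral.integral_add hDt ((hEt.sub hDt).const_mul c),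
      intervalIntegral.integral_const_mul, intervalIntegral.integral_sub hEt hDt]
    ring
  · simp only [hX.2.2.2, hY.2.2.2]; ring

lemma first_order_and_gap {T lam gam sig αi x : ℝ} {b S X D Y E : ℝ → ℝ} (hT : 0 ≤ T)
    (hlam : 0 ≤ lam) (hk : 0 ≤ αi * sig ^ 2 / 2)
    (hb : L2fun T b) (hS : L2fun T S)
    (hX : Admissible T x X D) (hY : Admissible T x Y E)
    (hmax : ∀ Y' E' : ℝ → ℝ, Admissible T x Y' E' →
      objective T lam gam sig αi b S Y' E' ≤ objective T lam gam sig αi b S X D) :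
    objective T lam gam sig αi b S X D - objective T lam gam sig αi b S Y E
      = αi * sig ^ 2 / 2 * (∫ t in (0:ℝ)..T, (Y t - X t) ^ 2)
        + lam * (∫ t in (0:ℝ)..T, (E t - D t) ^ 2) := by
  have hZ : L2fun T (fun t => Y t - X t) := (hY.l2Y hT).sub hT (hX.l2Y hT)
  have hW : L2fun T (fun t => E t - D t) := hY.l2D.sub hT hX.l2D
  have hXl := hX.l2Y hT
  have hDl := hX.l2D
  set L : ℝ := (∫ t in (0:ℝ)..T, (Y t - X t) * b t)
      + gam * (∫ t in (0:ℝ)..T, (Y t - X t) * S t)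
      - αi * sig ^ 2 / 2 * (2 * ∫ t in (0:ℝ)..T, X t * (Y t - X t))
      - lam * (∫ t in (0:ℝ)..T, (E t - D t) * S t)
      - lam * (2 * ∫ t in (0:ℝ)..T, D t * (E t - D t)) with hLdef
  set Q : ℝ := -(αi * sig ^ 2 / 2) * (∫ t in (0:ℝ)..T, (Y t - X t) ^ 2)
      - lam * (∫ t in (0:ℝ)..T, (E t - D t) ^ 2) with hQdef
  have expand : ∀ c : ℝ,
      objective T lam gam sig αi b S (fun t => X t + c * (Y t - X t))
        (fun t => D t + c * (E t - D t))
      = objective T lam gam sig αi b S X D + c * L + c ^ 2 * Q := by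
    intro c
    have hXc : L2fun T (fun t => X t + c * (Y t - X t)) := hXl.add hT (hZ.smul c)
    have hDc : L2fun T (fun t => D t + c * (E t - D t)) := hDl.add hT (hW.smul c)
    rw [objective_eq hT hb hS hXc hDc, objective_eq hT hb hS hXl hDl]
    have e1 : (∫ t in (0:ℝ)..T, (X t + c * (Y t - X t)) * b t)
        = (∫ t in (0:ℝ)..T, X t * b t) + c * (∫ t in (0:ℝ)..T, (Y t - X t) * b t) := by
      rw [intervalIntegral.integral_congr
        (g := fun t => X t * b t + c * ((Y t - X t) * b t)) (fun t _ => by ring),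
        intervalIntegral.integral_add (hXl.mul_II hT hb) ((hZ.mul_II hT hb).const_mul c),
        intervalIntegral.integral_const_mul]
    have e2 : (∫ t in (0:ℝ)..T, (X t + c * (Y t - X t)) * S t)
        = (∫ t in (0:ℝ)..T, X t * S t) + c * (∫ t in (0:ℝ)..T, (Y t - X t) * S t) := by
      rw [intervalIntegral.integral_congr
        (g := fun t => X t * S t + c * ((Y t - X t) * S t)) (fun t _ => by ring),
        intervalIntegral.integral_add (hXl.mul_II hT hS) ((hZ.mul_II hT hS).const_mul c),
        intervalIntegral.integral_const_mul]
    have e3 : (∫ t in (0:ℝ)..T, (X t + c * (Y t - X t)) ^ 2)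
        = (∫ t in (0:ℝ)..T, X t ^ 2) + c * (2 * ∫ t in (0:ℝ)..T, X t * (Y t - X t))
          + c ^ 2 * (∫ t in (0:ℝ)..T, (Y t - X t) ^ 2) := by
      rw [intervalIntegral.integral_congr
        (g := fun t => X t ^ 2 + c * (2 * (X t * (Y t - X t))) + c ^ 2 * ((Y t - X t) ^ 2))
        (fun t _ => by ring),
        intervalIntegral.integral_add (hXl.2.add (((hXl.mul_II hT hZ).const_mul 2).const_mul c))
          (hZ.2.const_mul (c ^ 2)),
        intervalIntegral.integral_add hXl.2 (((hXl.mul_II hT hZ).const_mul 2).const_mul c),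
        intervalIntegral.integral_const_mul, intervalIntegral.integral_const_mul,
        intervalIntegral.integral_const_mul]
    have e4 : (∫ t in (0:ℝ)..T, (D t + c * (E t - D t)) * S t)
        = (∫ t in (0:ℝ)..T, D t * S t) + c * (∫ t in (0:ℝ)..T, (E t - D t) * S t) := by
      rw [intervalIntegral.integral_congr
        (g := fun t => D t * S t + c * ((E t - D t) * S t)) (fun t _ => by ring),
        intervalIntegral.integral_add (hDl.mul_II hT hS) ((hW.mul_II hT hS).const_mul c),
        intervalIntegral.integral_const_mul]
    have e5 : (∫ t in (0:ℝ)..T, (D t + c * (E t - D t)) ^ 2)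
        = (∫ t in (0:ℝ)..T, D t ^ 2) + c * (2 * ∫ t in (0:ℝ)..T, D t * (E t - D t))
          + c ^ 2 * (∫ t in (0:ℝ)..T, (E t - D t) ^ 2) := by
      rw [intervalIntegral.integral_congr
        (g := fun t => D t ^ 2 + c * (2 * (D t * (E t - D t))) + c ^ 2 * ((E t - D t) ^ 2))
        (fun t _ => by ring),
        intervalIntegral.integral_add (hDl.2.add (((hDl.mul_II hT hW).const_mul 2).const_mul c))
          (hW.2.const_mul (c ^ 2)),
        intervalIntegral.integral_add hDl.2 (((hDl.mul_II hT hW).const_mul 2).const_mul c),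
        intervalIntegral.integral_const_mul, intervalIntegral.integral_const_mul,
        intervalIntegral.integral_const_mul]
    rw [e1, e2, e3, e4, e5, hLdef, hQdef]
    ring
  have hQZ : 0 ≤ (∫ t in (0:ℝ)..T, (Y t - X t) ^ 2) :=
    intervalIntegral.integral_nonneg hT (fun t _ => sq_nonneg _)
  have hQW : 0 ≤ (∫ t in (0:ℝ)..T, (E t - D t) ^ 2) :=
    intervalIntegral.integral_nonneg hT (fun t _ => sq_nonneg _)
  have hQle : Q ≤ 0 := by
    rw [hQdef]
    have := mul_nonneg hk hQZ
    have := mul_nonneg hlam hQW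
    nlinarith
  have key : ∀ c : ℝ, c * L + c ^ 2 * Q ≤ 0 := by
    intro c
    have h := hmax _ _ (hX.combo hT hY c)
    rw [expand c] at h
    linarith
  have hL : L = 0 := by
    set M : ℝ := 1 - Q with hM
    have hMpos : 0 < M := by rw [hM]; linarith
    have key2 : ∀ c : ℝ, c * L ≤ c ^ 2 * M := by
      intro c
      have h := key c
      nlinarith [sq_nonneg c]
    have h3 := key2 (L / (2 * M))
    have h4 : (L / (2 * M)) * L = L ^ 2 / (2 * M) := by ring
    have h5 : (L / (2 * M)) ^ 2 * M = L ^ 2 / (4 * M) := by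
      field_simp; ring
    rw [h4, h5] at h3
    have h6 := mul_le_mul_of_nonneg_right h3 (le_of_lt (by positivity : (0:ℝ) < 4 * M))
    have h7 : L ^ 2 / (2 * M) * (4 * M) = 2 * L ^ 2 := by field_simp; ring
    have h8 : L ^ 2 / (4 * M) * (4 * M) = L ^ 2 := by field_simp
    rw [h7, h8] at h6
    have : L ^ 2 = 0 := le_antisymm (by linarith) (sq_nonneg L)
    exact pow_eq_zero_iff (by norm_num) |>.mp this
  have h1 := expand 1
  have hYeq : (fun t => X t + 1 * (Y t - X t)) = Y := funext fun t => by ring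
  have hEeq : (fun t => D t + 1 * (E t - D t)) = E := funext fun t => by ring
  rw [hYeq, hEeq, hL] at h1
  rw [h1, hQdef]
  ring

lemma primitive_self_integral_zero {T : ℝ} (hT : 0 < T) {E : ℝ → ℝ}
    (hmeas : Measurable E) (hE2 : IntervalIntegrable (fun t => E t ^ 2) volume 0 T)
    (htot : (∫ t in (0:ℝ)..T, E t) = 0) :
    (∫ t in (0:ℝ)..T, (∫ s in (0:ℝ)..t, E s) * E t) = 0 := by
  set μ := volume.restrict (Ioc (0:ℝ) T) with hμ
  have hL2 : L2fun T E := ⟨hmeas.aestronglyMeasurable, hE2⟩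
  have hInt : Integrable E μ := by
    have := hL2.II hT.le
    rwa [intervalIntegrable_iff, uIoc_of_le hT.le] at this
  set G : ℝ × ℝ → ℝ := fun p => if p.1 ≤ p.2 then E p.1 * E p.2 else 0 with hG
  have hGmeas : Measurable G :=
    Measurable.ite (measurableSet_le measurable_fst measurable_snd)
      ((hmeas.comp measurable_fst).mul (hmeas.comp measurable_snd)) measurable_const
  have hprod : Integrable (fun p : ℝ × ℝ => E p.1 * E p.2) (μ.prod μ) :=
    hInt.mul_prod hInt
  have hGint : Integrable G (μ.prod μ) := by
    refine hprod.abs.mono' hGmeas.aestronglyMeasurable (ae_of_all _ fun p => ?_)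
    show ‖if p.1 ≤ p.2 then E p.1 * E p.2 else 0‖ ≤ |E p.1 * E p.2|
    rw [Real.norm_eq_abs]
    split_ifs
    · exact le_refl _
    · simp [abs_nonneg]; positivity
  have hdiag : (μ.prod μ) {p : ℝ × ℝ | p.1 = p.2} = 0 := by
    rw [Measure.prod_apply (measurableSet_eq_fun measurable_fst measurable_snd)]
    have h0 : ∀ x : ℝ, μ (Prod.mk x ⁻¹' {p : ℝ × ℝ | p.1 = p.2}) = 0 := by
      intro x
      have hxx : (Prod.mk x ⁻¹' {p : ℝ × ℝ | p.1 = p.2}) = {x} := by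
        ext y; simp [eq_comm]
      rw [hxx, hμ, Measure.restrict_apply (measurableSet_singleton x)]
      exact measure_mono_null Set.inter_subset_left (by simp)
    simp [h0]
  have hae : ∀ᵐ p : ℝ × ℝ ∂(μ.prod μ), p.1 ≠ p.2 := by
    rw [ae_iff, show {p : ℝ × ℝ | ¬p.1 ≠ p.2} = {p : ℝ × ℝ | p.1 = p.2} from by ext p; simp]
    exact hdiag
  have key1 : (∫ p : ℝ × ℝ, (G p + G p.swap) ∂(μ.prod μ))
      = ∫ p : ℝ × ℝ, E p.1 * E p.2 ∂(μ.prod μ) := by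
    refine integral_congr_ae ?_
    filter_upwards [hae] with p hp
    rcases lt_or_gt_of_ne hp with h | h
    · simp only [hG, Prod.fst_swap, Prod.snd_swap]
      rw [if_pos h.le, if_neg (not_le.mpr h)]
      ring
    · simp only [hG, Prod.fst_swap, Prod.snd_swap]
      rw [if_neg (not_le.mpr h), if_pos h.le]
      ring
  have key2 : (∫ p : ℝ × ℝ, G p.swap ∂(μ.prod μ)) = ∫ p : ℝ × ℝ, G p ∂(μ.prod μ) :=
    integral_prod_swap G
  have hswapint : Integrable (fun p : ℝ × ℝ => G p.swap) (μ.prod μ) := hGint.swap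
  have hEtot : (∫ t, E t ∂μ) = 0 := by
    rw [hμ, ← intervalIntegral.integral_of_le hT.le]; exact htot
  have hGzero : (∫ p : ℝ × ℝ, G p ∂(μ.prod μ)) = 0 := by
    have hsum := integral_add hGint hswapint
    rw [key1, key2] at hsum
    have hmul : (∫ p : ℝ × ℝ, E p.1 * E p.2 ∂(μ.prod μ)) = (∫ t, E t ∂μ) * (∫ t, E t ∂μ) :=
      integral_prod_mul E E
    rw [hmul, hEtot] at hsum
    linarith [hsum.symm]
  -- iterated integral, inner in the first variable
  have hiter : (∫ t, (∫ s, G (s, t) ∂μ) ∂μ) = 0 := by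
    have h1 : (∫ p : ℝ × ℝ, G p.swap ∂(μ.prod μ)) = ∫ t, (∫ s, G (s, t) ∂μ) ∂μ := by
      rw [integral_prod _ hswapint]
      simp only [Prod.swap_prod_mk]
    rw [← h1, key2, hGzero]
  -- identify the inner integral for a.e. t
  have hinner : (∫ t, (∫ s, G (s, t) ∂μ) ∂μ)
      = ∫ t, (∫ s in (0:ℝ)..t, E s) * E t ∂μ := by
    refine integral_congr_ae ?_
    filter_upwards [ae_restrict_mem measurableSet_Ioc] with t ht
    have hset : Iic t ∩ Ioc 0 T = Ioc 0 t := by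
      ext s
      simp only [Set.mem_inter_iff, Set.mem_Iic, Set.mem_Ioc]
      constructor
      · rintro ⟨h1, h2, h3⟩; exact ⟨h2, h1⟩
      · rintro ⟨h1, h2⟩; exact ⟨h2, h1, h2.trans ht.2⟩
    have step1 : (∫ s, G (s, t) ∂μ) = ∫ s, (Iic t).indicator (fun s => E s * E t) s ∂μ := by
      refine integral_congr_ae (ae_of_all _ fun s => ?_)
      simp [hG, Set.indicator_apply]
    rw [step1, integral_indicator measurableSet_Iic, hμ,
      Measure.restrict_restrict measurableSet_Iic, hset,
      integral_mul_const, ← intervalIntegral.integral_of_le ht.1.le]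
  rw [intervalIntegral.integral_of_le hT.le]
  rw [← hμ]  -- goal in terms of μ
  calc (∫ t, (∫ s in (0:ℝ)..t, E s) * E t ∂μ) = 0 := by rw [← hinner, hiter]

lemma objective_S_diff {T lam gam sig αi : ℝ} {b S S2 Y D : ℝ → ℝ} (hT : 0 ≤ T)
    (hb : L2fun T b) (hS : L2fun T S) (hS2 : L2fun T S2) (hY : L2fun T Y) (hD : L2fun T D) :
    objective T lam gam sig αi b S Y D - objective T lam gam sig αi b S2 Y D
      = gam * (∫ t in (0:ℝ)..T, Y t * (S t - S2 t))
        - lam * (∫ t in (0:ℝ)..T, D t * (S t - S2 t)) := by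
  rw [objective_eq hT hb hS hY hD, objective_eq hT hb hS2 hY hD]
  have e1 : (∫ t in (0:ℝ)..T, Y t * (S t - S2 t))
      = (∫ t in (0:ℝ)..T, Y t * S t) - ∫ t in (0:ℝ)..T, Y t * S2 t := by
    rw [intervalIntegral.integral_congr
      (g := fun t => Y t * S t - Y t * S2 t) (fun t _ => by ring),
      intervalIntegral.integral_sub (hY.mul_II hT hS) (hY.mul_II hT hS2)]
  have e2 : (∫ t in (0:ℝ)..T, D t * (S t - S2 t))
      = (∫ t in (0:ℝ)..T, D t * S t) - ∫ t in (0:ℝ)..T, D t * S2 t := by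
    rw [intervalIntegral.integral_congr
      (g := fun t => D t * S t - D t * S2 t) (fun t _ => by ring),
      intervalIntegral.integral_sub (hD.mul_II hT hS) (hD.mul_II hT hS2)]
  rw [e1, e2]; ring

lemma prim_mul_self_zero {T : ℝ} (hT : 0 < T) {Z E : ℝ → ℝ} (hmeas : Measurable E)
    (hE2 : IntervalIntegrable (fun t => E t ^ 2) volume 0 T)
    (hrep : ∀ t ∈ Icc (0:ℝ) T, Z t = ∫ s in (0:ℝ)..t, E s) (hZT : Z T = 0) :
    (∫ t in (0:ℝ)..T, Z t * E t) = 0 := by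
  have htot : (∫ t in (0:ℝ)..T, E t) = 0 := by
    rw [← hrep T ⟨hT.le, le_refl T⟩, hZT]
  have h := primitive_self_integral_zero hT hmeas hE2 htot
  rw [intervalIntegral.integral_congr (g := fun t => (∫ s in (0:ℝ)..t, E s) * E t)
    (fun t ht => by rw [uIcc_of_le hT.le] at ht; rw [hrep t ht])]
  exact h


/-- `(X, D)` (positions and their derivatives) is a Nash equilibrium:
each `Xᵢ ∈ 𝒳(xᵢ,T)` and `Xᵢ` maximizes `Jᵢ(·; X₋ᵢ)` over `𝒳(xᵢ,T)`. -/
def IsNashEquilibrium (T lam gam sig : ℝ) (n : ℕ) (α : Fin n → ℝ) (b : ℝ → ℝ)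
    (x : Fin n → ℝ) (X D : Fin n → ℝ → ℝ) : Prop :=
  (∀ i, Admissible T (x i) (X i) (D i)) ∧
  (∀ i, ∀ Y E : ℝ → ℝ, Admissible T (x i) Y E →
    objective T lam gam sig (α i) b
        (fun t => ∑ j ∈ Finset.univ.erase i, D j t) Y E
      ≤ objective T lam gam sig (α i) b
          (fun t => ∑ j ∈ Finset.univ.erase i, D j t) (X i) (D i))

/-- there is at most one Nash equilibrium for mean-variance
optimization. -/
theorem stmt_1 (T : ℝ) (hT : 0 < T) (n : ℕ) (lam gam sig : ℝ)
    (hlam : 0 < lam) (hgam : 0 ≤ gam) (hsig : 0 ≤ sig)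
    (α : Fin n → ℝ) (hα : ∀ i, 0 ≤ α i)
    (b : ℝ → ℝ) (hb : ContinuousOn b (Icc 0 T))
    (x : Fin n → ℝ)
    (X D X' D' : Fin n → ℝ → ℝ)
    (h1 : IsNashEquilibrium T lam gam sig n α b x X D)
    (h2 : IsNashEquilibrium T lam gam sig n α b x X' D') :
    ∀ i, EqOn (X i) (X' i) (Icc 0 T) := by
  classical
  have hT' : 0 ≤ T := hT.le
  obtain ⟨ha1, ho1⟩ := h1
  obtain ⟨ha2, ho2⟩ := h2
  have hbL2 : L2fun T b := L2fun.of_continuousOn hT' hb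
  have hDl : ∀ i, L2fun T (D i) := fun i => (ha1 i).l2D
  have hDl' : ∀ i, L2fun T (D' i) := fun i => (ha2 i).l2D
  have hXl : ∀ i, L2fun T (X i) := fun i => (ha1 i).l2Y hT'
  have hXl' : ∀ i, L2fun T (X' i) := fun i => (ha2 i).l2Y hT'
  have hS1 : ∀ i, L2fun T (fun t => ∑ j ∈ Finset.univ.erase i, D j t) :=
    fun i => L2fun.sum hT' _ _ (fun j _ => hDl j)
  have hS2 : ∀ i, L2fun T (fun t => ∑ j ∈ Finset.univ.erase i, D' j t) :=
    fun i => L2fun.sum hT' _ _ (fun j _ => hDl' j)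
  have hZl : ∀ i, L2fun T (fun t => X i t - X' i t) := fun i => (hXl i).sub hT' (hXl' i)
  have hEl : ∀ i, L2fun T (fun t => D i t - D' i t) := fun i => (hDl i).sub hT' (hDl' i)
  have hEbar : L2fun T (fun t => ∑ j, (D j t - D' j t)) :=
    L2fun.sum hT' Finset.univ (fun j t => D j t - D' j t) (fun j _ => hEl j)
  have hk : ∀ i, 0 ≤ α i * sig ^ 2 / 2 := fun i => by have := hα i; positivity
  have hIIt : ∀ (f : ℝ → ℝ), L2fun T f → ∀ t ∈ Icc (0:ℝ) T,
      IntervalIntegrable f volume 0 t := fun f hf t ht =>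
    (hf.II hT').mono_set (uIcc_subset_uIcc left_mem_uIcc (by rw [uIcc_of_le hT']; exact ht))
  -- gap identities
  have gap1 : ∀ i,
      objective T lam gam sig (α i) b (fun t => ∑ j ∈ Finset.univ.erase i, D j t) (X i) (D i)
        - objective T lam gam sig (α i) b
            (fun t => ∑ j ∈ Finset.univ.erase i, D j t) (X' i) (D' i)
      = α i * sig ^ 2 / 2 * (∫ t in (0:ℝ)..T, (X' i t - X i t) ^ 2)
        + lam * (∫ t in (0:ℝ)..T, (D' i t - D i t) ^ 2) :=
    fun i => first_order_and_gap hT' hlam.le (hk i) hbL2 (hS1 i) (ha1 i) (ha2 i) (ho1 i)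
  have gap2 : ∀ i,
      objective T lam gam sig (α i) b (fun t => ∑ j ∈ Finset.univ.erase i, D' j t) (X' i) (D' i)
        - objective T lam gam sig (α i) b
            (fun t => ∑ j ∈ Finset.univ.erase i, D' j t) (X i) (D i)
      = α i * sig ^ 2 / 2 * (∫ t in (0:ℝ)..T, (X i t - X' i t) ^ 2)
        + lam * (∫ t in (0:ℝ)..T, (D i t - D' i t) ^ 2) :=
    fun i => first_order_and_gap hT' hlam.le (hk i) hbL2 (hS2 i) (ha2 i) (ha1 i) (ho2 i)
  have sqX : ∀ i, (∫ t in (0:ℝ)..T, (X' i t - X i t) ^ 2)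
      = ∫ t in (0:ℝ)..T, (X i t - X' i t) ^ 2 :=
    fun i => intervalIntegral.integral_congr (fun t _ => by ring)
  have sqD : ∀ i, (∫ t in (0:ℝ)..T, (D' i t - D i t) ^ 2)
      = ∫ t in (0:ℝ)..T, (D i t - D' i t) ^ 2 :=
    fun i => intervalIntegral.integral_congr (fun t _ => by ring)
  -- cross terms
  have cross1 : ∀ i,
      objective T lam gam sig (α i) b (fun t => ∑ j ∈ Finset.univ.erase i, D j t) (X i) (D i)
        - objective T lam gam sig (α i) b
            (fun t => ∑ j ∈ Finset.univ.erase i, D' j t) (X i) (D i)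
      = gam * (∫ t in (0:ℝ)..T, X i t *
            ((∑ j ∈ Finset.univ.erase i, D j t) - ∑ j ∈ Finset.univ.erase i, D' j t))
        - lam * (∫ t in (0:ℝ)..T, D i t *
            ((∑ j ∈ Finset.univ.erase i, D j t) - ∑ j ∈ Finset.univ.erase i, D' j t)) :=
    fun i => objective_S_diff hT' hbL2 (hS1 i) (hS2 i) (hXl i) (hDl i)
  have cross2 : ∀ i,
      objective T lam gam sig (α i) b (fun t => ∑ j ∈ Finset.univ.erase i, D j t) (X' i) (D' i)
        - objective T lam gam sig (α i) b
            (fun t => ∑ j ∈ Finset.univ.erase i, D' j t) (X' i) (D' i)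
      = gam * (∫ t in (0:ℝ)..T, X' i t *
            ((∑ j ∈ Finset.univ.erase i, D j t) - ∑ j ∈ Finset.univ.erase i, D' j t))
        - lam * (∫ t in (0:ℝ)..T, D' i t *
            ((∑ j ∈ Finset.univ.erase i, D j t) - ∑ j ∈ Finset.univ.erase i, D' j t)) :=
    fun i => objective_S_diff hT' hbL2 (hS1 i) (hS2 i) (hXl' i) (hDl' i)
  -- pointwise difference of the competitor aggregates
  have hdiff : ∀ i, ∀ t : ℝ,
      (∑ j ∈ Finset.univ.erase i, D j t) - (∑ j ∈ Finset.univ.erase i, D' j t)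
      = (∑ j, (D j t - D' j t)) - (D i t - D' i t) := by
    intro i t
    have h1 := Finset.sum_erase_add Finset.univ (fun j => D j t) (Finset.mem_univ i)
    have h2 := Finset.sum_erase_add Finset.univ (fun j => D' j t) (Finset.mem_univ i)
    have h3 : (∑ j, (D j t - D' j t)) = (∑ j, D j t) - ∑ j, D' j t :=
      Finset.sum_sub_distrib _ _
    rw [h3]; rw [← h1, ← h2]; ring
  -- the per-player cross integrals decomposed
  have decZ : ∀ i, (∫ t in (0:ℝ)..T, X i t *
            ((∑ j ∈ Finset.univ.erase i, D j t) - ∑ j ∈ Finset.univ.erase i, D' j t))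
        - (∫ t in (0:ℝ)..T, X' i t *
            ((∑ j ∈ Finset.univ.erase i, D j t) - ∑ j ∈ Finset.univ.erase i, D' j t))
      = (∫ t in (0:ℝ)..T, (X i t - X' i t) * (∑ j, (D j t - D' j t)))
        - ∫ t in (0:ℝ)..T, (X i t - X' i t) * (D i t - D' i t) := by
    intro i
    have hSd : L2fun T (fun t =>
        (∑ j ∈ Finset.univ.erase i, D j t) - ∑ j ∈ Finset.univ.erase i, D' j t) :=
      (hS1 i).sub hT' (hS2 i)
    rw [← intervalIntegral.integral_sub ((hXl i).mul_II hT' hSd) ((hXl' i).mul_II hT' hSd),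
      ← intervalIntegral.integral_sub ((hZl i).mul_II hT' hEbar) ((hZl i).mul_II hT' (hEl i))]
    refine intervalIntegral.integral_congr (fun t _ => ?_)
    simp only [hdiff i t]; ring
  have decE : ∀ i, (∫ t in (0:ℝ)..T, D i t *
            ((∑ j ∈ Finset.univ.erase i, D j t) - ∑ j ∈ Finset.univ.erase i, D' j t))
        - (∫ t in (0:ℝ)..T, D' i t *
            ((∑ j ∈ Finset.univ.erase i, D j t) - ∑ j ∈ Finset.univ.erase i, D' j t))
      = (∫ t in (0:ℝ)..T, (D i t - D' i t) * (∑ j, (D j t - D' j t)))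
        - ∫ t in (0:ℝ)..T, (D i t - D' i t) ^ 2 := by
    intro i
    have hSd : L2fun T (fun t =>
        (∑ j ∈ Finset.univ.erase i, D j t) - ∑ j ∈ Finset.univ.erase i, D' j t) :=
      (hS1 i).sub hT' (hS2 i)
    rw [← intervalIntegral.integral_sub ((hDl i).mul_II hT' hSd) ((hDl' i).mul_II hT' hSd),
      ← intervalIntegral.integral_sub ((hEl i).mul_II hT' hEbar) (hEl i).2]
    refine intervalIntegral.integral_congr (fun t _ => ?_)
    simp only [hdiff i t]; ring
  -- representation of the differences as primitives
  have hrep : ∀ i, ∀ t ∈ Icc (0:ℝ) T,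
      X i t - X' i t = ∫ s in (0:ℝ)..t, (D i s - D' i s) := by
    intro i t ht
    rw [(ha1 i).2.2.1 t ht, (ha2 i).2.2.1 t ht,
      intervalIntegral.integral_sub (hIIt _ (hDl i) t ht) (hIIt _ (hDl' i) t ht)]
    ring
  -- FTC-type vanishing integrals
  have hZE : ∀ i, (∫ t in (0:ℝ)..T, (X i t - X' i t) * (D i t - D' i t)) = 0 := by
    intro i
    exact prim_mul_self_zero hT ((ha1 i).1.sub (ha2 i).1) (hEl i).2 (hrep i)
      (by rw [(ha1 i).2.2.2, (ha2 i).2.2.2]; ring)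
  have hZbarEbar :
      (∫ t in (0:ℝ)..T, (∑ j, (X j t - X' j t)) * (∑ j, (D j t - D' j t))) = 0 := by
    refine prim_mul_self_zero hT
      (Finset.measurable_sum _ fun j _ => ((ha1 j).1.sub (ha2 j).1)) hEbar.2 ?_ ?_
    · intro t ht
      rw [intervalIntegral.integral_finset_sum (fun j _ => hIIt _ (hEl j) t ht)]
      exact Finset.sum_congr rfl (fun j _ => hrep j t ht)
    · exact Finset.sum_eq_zero fun j _ => by rw [(ha1 j).2.2.2, (ha2 j).2.2.2]; ring
  -- sum identities
  have hsumA : (∑ i, ∫ t in (0:ℝ)..T, (X i t - X' i t) * (∑ j, (D j t - D' j t))) = 0 := by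
    rw [← intervalIntegral.integral_finset_sum (fun i _ => (hZl i).mul_II hT' hEbar)]
    rw [intervalIntegral.integral_congr
      (g := fun t => (∑ j, (X j t - X' j t)) * (∑ j, (D j t - D' j t)))
      (fun t _ => (Finset.sum_mul _ _ _).symm)]
    exact hZbarEbar
  have hsumB : (∑ i, ∫ t in (0:ℝ)..T, (D i t - D' i t) * (∑ j, (D j t - D' j t)))
      = ∫ t in (0:ℝ)..T, (∑ j, (D j t - D' j t)) ^ 2 := by
    rw [← intervalIntegral.integral_finset_sum (fun i _ => (hEl i).mul_II hT' hEbar)]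
    refine intervalIntegral.integral_congr (fun t _ => ?_)
    rw [← Finset.sum_mul]; ring
  -- nonnegativity
  have hIZnn : ∀ i, 0 ≤ ∫ t in (0:ℝ)..T, (X i t - X' i t) ^ 2 :=
    fun i => intervalIntegral.integral_nonneg hT' (fun t _ => sq_nonneg _)
  have hIEnn : ∀ i, 0 ≤ ∫ t in (0:ℝ)..T, (D i t - D' i t) ^ 2 :=
    fun i => intervalIntegral.integral_nonneg hT' (fun t _ => sq_nonneg _)
  have hEbarnn : 0 ≤ ∫ t in (0:ℝ)..T, (∑ j, (D j t - D' j t)) ^ 2 :=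
    intervalIntegral.integral_nonneg hT' (fun t _ => sq_nonneg _)
  -- per-player scalar identity
  have per : ∀ i,
      gam * (∫ t in (0:ℝ)..T, (X i t - X' i t) * (∑ j, (D j t - D' j t)))
      = 2 * (α i * sig ^ 2 / 2 * (∫ t in (0:ℝ)..T, (X i t - X' i t) ^ 2))
        + lam * (∫ t in (0:ℝ)..T, (D i t - D' i t) ^ 2)
        + lam * (∫ t in (0:ℝ)..T, (D i t - D' i t) * (∑ j, (D j t - D' j t))) := by
    intro i
    have g1 := gap1 i
    have g2 := gap2 i
    rw [sqX i, sqD i] at g1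
    have c1 := cross1 i
    have c2 := cross2 i
    have dZ := decZ i
    have dE := decE i
    have hze := hZE i
    linear_combination g1 + g2 - c1 + c2 - gam * dZ + lam * dE + gam * hze
  -- sum the per-player identities
  have hsum := Finset.sum_congr rfl (fun i (_ : i ∈ Finset.univ) => per i)
  have hLHS : (∑ i, gam * ∫ t in (0:ℝ)..T, (X i t - X' i t) * (∑ j, (D j t - D' j t))) = 0 := by
    rw [← Finset.mul_sum, hsumA, mul_zero]
  rw [hLHS, Finset.sum_add_distrib, Finset.sum_add_distrib] at hsum
  have hB2 : (∑ i, lam * (∫ t in (0:ℝ)..T, (D i t - D' i t) * (∑ j, (D j t - D' j t))))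
      = lam * (∫ t in (0:ℝ)..T, (∑ j, (D j t - D' j t)) ^ 2) := by
    rw [← Finset.mul_sum, hsumB]
  have hE2' : (∑ i, lam * (∫ t in (0:ℝ)..T, (D i t - D' i t) ^ 2))
      = lam * ∑ i, (∫ t in (0:ℝ)..T, (D i t - D' i t) ^ 2) := (Finset.mul_sum _ _ _).symm
  rw [hB2, hE2'] at hsum
  -- conclude that each ∫ (D i - D' i)^2 vanishes
  have hKnn : 0 ≤ ∑ i, 2 * (α i * sig ^ 2 / 2 * (∫ t in (0:ℝ)..T, (X i t - X' i t) ^ 2)) :=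
    Finset.sum_nonneg fun i _ => by
      have := mul_nonneg (hk i) (hIZnn i); linarith
  have hsumIE : (∑ i, ∫ t in (0:ℝ)..T, (D i t - D' i t) ^ 2) = 0 := by
    have hnn : 0 ≤ ∑ i, ∫ t in (0:ℝ)..T, (D i t - D' i t) ^ 2 :=
      Finset.sum_nonneg fun i _ => hIEnn i
    nlinarith [hsum, hKnn, hEbarnn, hlam]
  have hIEzero : ∀ i, (∫ t in (0:ℝ)..T, (D i t - D' i t) ^ 2) = 0 := by
    intro i
    have := (Finset.sum_eq_zero_iff_of_nonneg (fun i _ => hIEnn i)).mp hsumIE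
    exact this i (Finset.mem_univ i)
  -- from vanishing L² norm to vanishing primitive
  intro i t ht
  have hae : (fun s => D i s - D' i s) =ᵐ[volume.restrict (Ioc (0:ℝ) T)] 0 := by
    have h0 := hIEzero i
    rw [intervalIntegral.integral_of_le hT'] at h0
    have hint : Integrable (fun s => (D i s - D' i s) ^ 2) (volume.restrict (Ioc (0:ℝ) T)) := by
      have := (hEl i).2
      rwa [intervalIntegrable_iff, uIoc_of_le hT'] at this
    have := (integral_eq_zero_iff_of_nonneg_ae (ae_of_all _ fun s => sq_nonneg _) hint).mp h0
    filter_upwards [this] with s hs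
    have : (D i s - D' i s) ^ 2 = 0 := hs
    have := pow_eq_zero_iff (n := 2) (by norm_num) |>.mp this
    simpa using this
  have hprim0 : (∫ s in (0:ℝ)..t, (D i s - D' i s)) = 0 := by
    have hsub : (fun s => D i s - D' i s) =ᵐ[volume.restrict (Ioc (0:ℝ) t)] 0 :=
      ae_restrict_of_ae_restrict_of_subset (Ioc_subset_Ioc_right ht.2) hae
    rw [intervalIntegral.integral_of_le ht.1, integral_congr_ae hsub]
    simp
  have := hrep i t ht
  rw [hprim0] at this
  have : X i t = X' i t := by linarith [this]
  exact this
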